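/- Let V_l : H_l → H_l ⊗ K (l = 1,2) be primitive isometries and T₁₂(X) = V₁*(X ⊗ id_K)V₂ on B(H₂, H₁). If T₁₂ has an eigenvalue c of modulus one, then there exists a unitary U : H₂ → H₁ such that V₂ = c(U* ⊗ id_K)V₁U, and moreover T₁₂(U) = cU. -/

import Mathlib

open Matrix Filter
open scoped Kronecker ComplexOrder

noncomputable section

/-- The action of `Φ ⊗ id_n` on block matrices, used to define complete positivity. -/
def tensorId {a b : Type*} (Φ : Matrix a a ℂ → Matrix b b ℂ) (n : ℕ)
    (X : Matrix (a × Fin n) (a × Fin n) ℂ) : Matrix (b × Fin n) (b × Fin n) ℂ :=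
  fun p q => Φ (fun i j => X (i, p.2) (j, q.2)) p.1 q.1

/-- A map between matrix algebras is completely positive if `Φ ⊗ id_n` preserves
positive semidefiniteness for every `n`. -/
def IsCompletelyPositive {a b : Type*} [Fintype a] [Fintype b]
    (Φ : Matrix a a ℂ → Matrix b b ℂ) : Prop :=
  ∀ (n : ℕ) (X : Matrix (a × Fin n) (a × Fin n) ℂ), X.PosSemidef → (tensorId Φ n X).PosSemidef

/-- The map `X ↦ V₁* (X ⊗ 1_K) V₂` on `B(H₂, H₁)`, as a linear endomorphism.
For `V₁ = V₂ = V` this is the Heisenberg channel associated with the isometry `V`. -/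
def sandwich {α β : Type*} [Fintype α] [Fintype β] {k : ℕ}
    (V₁ : Matrix (α × Fin k) α ℂ) (V₂ : Matrix (β × Fin k) β ℂ) :
    Module.End ℂ (Matrix α β ℂ) where
  toFun X := V₁ᴴ * (X ⊗ₖ (1 : Matrix (Fin k) (Fin k) ℂ)) * V₂
  map_add' X Y := by simp [Matrix.add_kronecker, Matrix.add_mul, Matrix.mul_add]
  map_smul' c X := by simp [Matrix.smul_kronecker, Matrix.smul_mul, Matrix.mul_smul]

/-- The Kraus operators `K_i` of an isometry `V : H → H ⊗ K`,
defined by `K_i φ = (id ⊗ ⟨i|) V φ`. -/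
def kraus {D k : ℕ} (V : Matrix (Fin D × Fin k) (Fin D) ℂ) (i : Fin k) :
    Matrix (Fin D) (Fin D) ℂ :=
  fun a b => V (a, i) b

/-- The `n`-step Kraus operator `K_{ι(n-1)} ⋯ K_{ι(0)}` associated with a word `ι`. -/
def krausString {D k : ℕ} (V : Matrix (Fin D × Fin k) (Fin D) ℂ) :
    (n : ℕ) → (Fin n → Fin k) → Matrix (Fin D) (Fin D) ℂ
  | 0, _ => 1
  | n + 1, ι => kraus V (ι (Fin.last n)) * krausString V n (fun m => ι m.castSucc)

/-- The output state `tr_H [V(n) ρ V(n)*]` after `n` steps, a density matrix on `K^⊗n`. -/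
def outputState {D k : ℕ} (V : Matrix (Fin D × Fin k) (Fin D) ℂ)
    (ρ : Matrix (Fin D) (Fin D) ℂ) (n : ℕ) :
    Matrix (Fin n → Fin k) (Fin n → Fin k) ℂ :=
  fun ι ι' => Matrix.trace (krausString V n ι * ρ * (krausString V n ι')ᴴ)

/-- The Schrödinger (predual) transition map `ρ ↦ Σ_i K_i ρ K_i*`. -/
def schrodinger {D k : ℕ} (V : Matrix (Fin D × Fin k) (Fin D) ℂ)
    (ρ : Matrix (Fin D) (Fin D) ℂ) : Matrix (Fin D) (Fin D) ℂ :=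
  ∑ i, kraus V i * ρ * (kraus V i)ᴴ

/-- A linear endomorphism of a matrix algebra is primitive if some power of it maps every
nonzero positive semidefinite matrix to a positive definite one. -/
def PrimitiveMap {α : Type*} [Fintype α] [DecidableEq α]
    (T : Module.End ℂ (Matrix α α ℂ)) : Prop :=
  ∃ n : ℕ, ∀ X : Matrix α α ℂ, X.PosSemidef → X ≠ 0 → ((T ^ n) X).PosDef

/-- An isometry `V : H → H ⊗ K` is primitive if its channel `X ↦ V*(X ⊗ 1)V` is primitive. -/
def PrimitiveIso {D k : ℕ} (V : Matrix (Fin D × Fin k) (Fin D) ℂ) : Prop :=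
  PrimitiveMap (sandwich V V)

/-- The pure state `|x⟩⟨x|` associated with a vector `x`. -/
def outer {α : Type*} (x : α → ℂ) : Matrix α α ℂ := Matrix.vecMulVec x (star x)

/-- The trace norm of a matrix: the trace of `√(A* A)`. -/
def traceNorm {α : Type*} [Fintype α] [DecidableEq α] (A : Matrix α α ℂ) : ℝ :=
  ((Matrix.posSemidef_conjTranspose_mul_self A).1.eigenvectorUnitary.1 *
      Matrix.diagonal ((fun x : ℝ => (x : ℂ)) ∘ (Real.sqrt ·) ∘ (Matrix.posSemidef_conjTranspose_mul_self A).1.eigenvalues) *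
      (star (Matrix.posSemidef_conjTranspose_mul_self A).1.eigenvectorUnitary : Matrix α α ℂ)).trace.re

/-- A quantum channel: a completely positive trace preserving linear map. -/
def IsCPTP {α β : Type*} [Fintype α] [Fintype β]
    (Φ : Matrix α α ℂ →ₗ[ℂ] Matrix β β ℂ) : Prop :=
  IsCompletelyPositive (Φ : Matrix α α ℂ → Matrix β β ℂ) ∧
    ∀ X : Matrix α α ℂ, (Φ X).trace = X.trace

/-!
If `F` is an eigenvector of `T₁₂` with unimodular eigenvalue, the Kadison–Schwarz inequality makes
`Fᴴ F` subinvariant for the channel `T₂₂`, and likewise `F Fᴴ` for `T₁₁`. For a primitive unital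
positive map a Hermitian subinvariant `A` is a scalar: if `λ` is the top of the spectrum of `A`,
then `λ - A` is positive and dominates all its iterates; were it nonzero, one iterate would be
positive definite, making `λ - A` invertible, which it is not. Hence a rescaling `U` of `F` is
unitary, and the isometries `(U ⊗ 1) V₂` and `V₁ U` have inner product `c`, of modulus one, so
they agree up to the factor `c`.
-/

open scoped MatrixOrder

theorem PrimitiveMap.eq_smul_one_of_le_apply {n : Type*} [Fintype n] [DecidableEq n]
    {T : Module.End ℂ (Matrix n n ℂ)} (hP : PrimitiveMap T) (hT : Monotone T) (hT1 : T 1 = 1)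
    {A : Matrix n n ℂ} (hA : A.IsHermitian) (hAT : A ≤ T A) : ∃ r : ℝ, A = r • (1 : Matrix n n ℂ) := by
  cases isEmpty_or_nonempty n
  · exact ⟨0, Subsingleton.elim _ _⟩
  obtain ⟨i, hi⟩ := Finite.exists_max hA.eigenvalues
  set r := hA.eigenvalues i
  have hr : r ∈ spectrum ℝ A := hA.eigenvalues_mem_spectrum_real i
  have hAr : A ≤ algebraMap ℝ (Matrix n n ℂ) r := by
    rw [le_algebraMap_iff_spectrum_le hA.isSelfAdjoint, hA.spectrum_real_eq_range_eigenvalues]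
    rintro _ ⟨j, rfl⟩
    exact hi j
  set B := algebraMap ℝ (Matrix n n ℂ) r - A
  have hTB : T B ≤ B := by
    simp only [B]
    rw [map_sub, Algebra.algebraMap_eq_smul_one, LinearMap.map_smul_of_tower, hT1]
    exact sub_le_sub_left hAT _
  refine ⟨r, ?_⟩
  by_contra hne
  have hB0 : B ≠ 0 := by
    rwa [Ne, sub_eq_zero, eq_comm, Algebra.algebraMap_eq_smul_one]
  obtain ⟨m, hm⟩ := hP
  have hBm : (T ^ m) B ≤ B := by
    rw [Module.End.pow_apply]
    exact hT.antitone_iterate_of_map_le hTB (Nat.zero_le m)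
  have hpd : B.PosDef := by
    have := (hm B (le_iff.mp hAr) hB0).add_posSemidef (le_iff.mp hBm)
    rwa [add_sub_cancel] at this
  exact spectrum.mem_iff.mp hr hpd.isUnit

theorem mul_conjTranspose_le_one_of_conjTranspose_mul_eq_one {m n : Type*} [Fintype m]
    [Fintype n] [DecidableEq m] [DecidableEq n] {V : Matrix m n ℂ} (hV : Vᴴ * V = 1) :
    V * Vᴴ ≤ 1 := by
  have hPP : V * Vᴴ * (V * Vᴴ) = V * Vᴴ := by
    rw [Matrix.mul_assoc, ← Matrix.mul_assoc Vᴴ, hV, Matrix.one_mul]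
  have hP : (1 - V * Vᴴ)ᴴ * (1 - V * Vᴴ) = 1 - V * Vᴴ := by
    simp only [conjTranspose_sub, conjTranspose_one, conjTranspose_mul,
      conjTranspose_conjTranspose, Matrix.sub_mul, Matrix.mul_sub, Matrix.one_mul,
      Matrix.mul_one, hPP, sub_self, sub_zero]
  rw [le_iff, ← hP]
  exact posSemidef_conjTranspose_mul_self _

section Sandwich

variable {α β : Type*} [Fintype α] [Fintype β] {k : ℕ}

theorem sandwich_apply (V₁ : Matrix (α × Fin k) α ℂ) (V₂ : Matrix (β × Fin k) β ℂ)
    (X : Matrix α β ℂ) : sandwich V₁ V₂ X = V₁ᴴ * (X ⊗ₖ (1 : Matrix (Fin k) (Fin k) ℂ)) * V₂ :=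
  rfl

theorem conjTranspose_sandwich (V₁ : Matrix (α × Fin k) α ℂ) (V₂ : Matrix (β × Fin k) β ℂ)
    (X : Matrix α β ℂ) : (sandwich V₁ V₂ X)ᴴ = sandwich V₂ V₁ Xᴴ := by
  simp only [sandwich_apply, conjTranspose_mul, conjTranspose_conjTranspose,
    conjTranspose_kronecker, conjTranspose_one, Matrix.mul_assoc]

theorem sandwich_monotone (V : Matrix (α × Fin k) α ℂ) : Monotone (sandwich V V) := by
  intro X Y hXY
  rw [le_iff, ← map_sub, sandwich_apply]
  exact ((le_iff.mp hXY).kronecker PosSemidef.one).conjTranspose_mul_mul_same V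

variable [DecidableEq α]

theorem sandwich_one {V : Matrix (α × Fin k) α ℂ} (hV : Vᴴ * V = 1) : sandwich V V 1 = 1 := by
  rw [sandwich_apply, one_kronecker_one, Matrix.mul_one, hV]

/-- The Kadison–Schwarz inequality for `T₁₂`. -/
theorem conjTranspose_sandwich_mul_sandwich_le {V₁ : Matrix (α × Fin k) α ℂ}
    (hV₁ : V₁ᴴ * V₁ = 1) (V₂ : Matrix (β × Fin k) β ℂ) (X : Matrix α β ℂ) :
    (sandwich V₁ V₂ X)ᴴ * sandwich V₁ V₂ X ≤ sandwich V₂ V₂ (Xᴴ * X) := by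
  set M := (X ⊗ₖ (1 : Matrix (Fin k) (Fin k) ℂ)) * V₂
  have hlhs : (sandwich V₁ V₂ X)ᴴ * sandwich V₁ V₂ X = Mᴴ * (V₁ * V₁ᴴ) * M := by
    simp only [sandwich_apply, Matrix.mul_assoc, conjTranspose_mul, conjTranspose_conjTranspose,
      M]
  have hrhs : sandwich V₂ V₂ (Xᴴ * X) = Mᴴ * M := by
    simp only [sandwich_apply, M, conjTranspose_mul, conjTranspose_kronecker, conjTranspose_one,
      Matrix.mul_assoc]
    rw [← Matrix.mul_assoc (Xᴴ ⊗ₖ _), ← mul_kronecker_mul, Matrix.one_mul]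
  have hgap : Mᴴ * M - Mᴴ * (V₁ * V₁ᴴ) * M = Mᴴ * (1 - V₁ * V₁ᴴ) * M := by
    rw [Matrix.mul_sub, Matrix.sub_mul, Matrix.mul_one]
  rw [hlhs, hrhs, le_iff, hgap]
  exact (le_iff.mp (mul_conjTranspose_le_one_of_conjTranspose_mul_eq_one hV₁))
    |>.conjTranspose_mul_mul_same M

theorem conjTranspose_mul_self_le_sandwich_of_sandwich_eq_smul {V₁ : Matrix (α × Fin k) α ℂ}
    (hV₁ : V₁ᴴ * V₁ = 1) {V₂ : Matrix (β × Fin k) β ℂ} {c : ℂ} (hc : ‖c‖ = 1)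
    {F : Matrix α β ℂ} (hF : sandwich V₁ V₂ F = c • F) :
    Fᴴ * F ≤ sandwich V₂ V₂ (Fᴴ * F) := by
  have hcc : c * starRingEnd ℂ c = 1 := by
    rw [Complex.mul_conj', hc]
    norm_num
  simpa [hF, smul_smul, hcc] using conjTranspose_sandwich_mul_sandwich_le hV₁ V₂ F

end Sandwich

theorem eq_smul_of_conjTranspose_mul_eq_smul_one {m n : Type*} [Fintype m] [Fintype n]
    [DecidableEq n] {N L : Matrix m n ℂ} (hN : Nᴴ * N = 1) (hL : Lᴴ * L = 1) {c : ℂ}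
    (hc : ‖c‖ = 1) (hLN : Lᴴ * N = c • 1) : N = c • L := by
  have hNL : Nᴴ * L = starRingEnd ℂ c • 1 := by
    simpa using congrArg conjTranspose hLN
  have hcc : starRingEnd ℂ c * c = 1 := by
    rw [Complex.conj_mul', hc]
    norm_num
  have hW : (N - c • L)ᴴ * (N - c • L) = 0 := by
    simp only [conjTranspose_sub, conjTranspose_smul, Matrix.sub_mul, Matrix.mul_sub,
      Matrix.smul_mul, Matrix.mul_smul, hN, hL, hLN, hNL, smul_smul, Complex.star_def, hcc,
      one_smul, smul_zero, sub_self]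
  exact sub_eq_zero.mp (conjTranspose_mul_self_eq_zero.mp hW)

theorem exists_smul_unitary_of_mul_conjTranspose_eq_smul_one {m n : Type*} [Fintype m]
    [Fintype n] [DecidableEq m] [DecidableEq n] {F : Matrix m n ℂ} (hF : F ≠ 0) {r s : ℝ}
    (hr : Fᴴ * F = r • 1) (hs : F * Fᴴ = s • 1) :
    ∃ t : ℝ, (t • F)ᴴ * (t • F) = 1 ∧ t • F * (t • F)ᴴ = 1 := by
  have hsr : s = r := by
    refine smul_left_injective ℝ hF ?_
    calc s • F = F * Fᴴ * F := by rw [hs, Matrix.smul_mul, Matrix.one_mul]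
      _ = F * (Fᴴ * F) := Matrix.mul_assoc _ _ _
      _ = r • F := by rw [hr, Matrix.mul_smul, Matrix.mul_one]
  have hr0 : 0 < r := by
    obtain ⟨j⟩ : Nonempty n := by
      by_contra! h
      exact hF (Subsingleton.elim _ _)
    have hr_nonneg : (0 : ℂ) ≤ r := by
      simpa [hr] using (posSemidef_conjTranspose_mul_self F).diag_nonneg (i := j)
    refine lt_of_le_of_ne (Complex.zero_le_real.mp hr_nonneg) fun h => hF ?_
    rw [← conjTranspose_mul_self_eq_zero, hr, ← h, zero_smul]
  refine ⟨(√r)⁻¹, ?_⟩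
  have ht : (√r)⁻¹ * ((√r)⁻¹ * r) = 1 := by
    rw [← mul_assoc, ← mul_inv, Real.mul_self_sqrt hr0.le, inv_mul_cancel₀ hr0.ne']
  simp only [conjTranspose_smul, star_trivial, Matrix.smul_mul, Matrix.mul_smul, hr, hs, hsr,
    smul_smul, ht, one_smul, and_self]

theorem eq_smul_kronecker_mul_of_sandwich_eq_smul {α β : Type*} [Fintype α] [Fintype β]
    [DecidableEq α] [DecidableEq β] {k : ℕ} {V₁ : Matrix (α × Fin k) α ℂ} (hV₁ : V₁ᴴ * V₁ = 1)
    {V₂ : Matrix (β × Fin k) β ℂ} (hV₂ : V₂ᴴ * V₂ = 1) {U : Matrix α β ℂ} (hU : Uᴴ * U = 1)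
    {c : ℂ} (hc : ‖c‖ = 1) (hUc : sandwich V₁ V₂ U = c • U) :
    V₂ = c • ((Uᴴ ⊗ₖ (1 : Matrix (Fin k) (Fin k) ℂ)) * V₁ * U) := by
  set U₁ := U ⊗ₖ (1 : Matrix (Fin k) (Fin k) ℂ)
  have hU₁ : U₁ᴴ * U₁ = 1 := by
    rw [conjTranspose_kronecker, conjTranspose_one, ← mul_kronecker_mul, hU, Matrix.one_mul,
      one_kronecker_one]
  have hN : (U₁ * V₂)ᴴ * (U₁ * V₂) = 1 := by
    rw [conjTranspose_mul, Matrix.mul_assoc, ← Matrix.mul_assoc U₁ᴴ, hU₁, Matrix.one_mul, hV₂]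
  have hL : (V₁ * U)ᴴ * (V₁ * U) = 1 := by
    rw [conjTranspose_mul, Matrix.mul_assoc, ← Matrix.mul_assoc V₁ᴴ, hV₁, Matrix.one_mul, hU]
  have hLN : (V₁ * U)ᴴ * (U₁ * V₂) = c • 1 := by
    rw [conjTranspose_mul, Matrix.mul_assoc, ← Matrix.mul_assoc V₁ᴴ, ← sandwich_apply, hUc,
      Matrix.mul_smul, hU]
  calc V₂ = U₁ᴴ * (U₁ * V₂) := by rw [← Matrix.mul_assoc, hU₁, Matrix.one_mul]
    _ = c • (Uᴴ ⊗ₖ (1 : Matrix (Fin k) (Fin k) ℂ) * V₁ * U) := by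
      rw [eq_smul_of_conjTranspose_mul_eq_smul_one hN hL hc hLN, Matrix.mul_smul,
        conjTranspose_kronecker, conjTranspose_one, Matrix.mul_assoc]

/-- If `T₁₂(X) = V₁*(X ⊗ 1)V₂` has an eigenvalue `c` of modulus one, then there exists a
unitary `U : H₂ → H₁` with `V₂ = c (U* ⊗ 1) V₁ U` and `T₁₂(U) = c U`. -/
theorem modulus_one_eigenvalue_gives_gauge_equivalence (D₁ D₂ k : ℕ)
    (V₁ : Matrix (Fin D₁ × Fin k) (Fin D₁) ℂ) (hV₁ : V₁ᴴ * V₁ = 1) (hP₁ : PrimitiveIso V₁)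
    (V₂ : Matrix (Fin D₂ × Fin k) (Fin D₂) ℂ) (hV₂ : V₂ᴴ * V₂ = 1) (hP₂ : PrimitiveIso V₂)
    (c : ℂ) (hc : ‖c‖ = 1)
    (F : Matrix (Fin D₁) (Fin D₂) ℂ) (hF : F ≠ 0)
    (heig : sandwich V₁ V₂ F = c • F) :
    ∃ U : Matrix (Fin D₁) (Fin D₂) ℂ, Uᴴ * U = 1 ∧ U * Uᴴ = 1 ∧
      V₂ = c • ((Uᴴ ⊗ₖ (1 : Matrix (Fin k) (Fin k) ℂ)) * V₁ * U) ∧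
      sandwich V₁ V₂ U = c • U := by
  have heig' : sandwich V₂ V₁ Fᴴ = star c • Fᴴ := by
    rw [← conjTranspose_sandwich, heig, conjTranspose_smul]
  have hsub₂ := conjTranspose_mul_self_le_sandwich_of_sandwich_eq_smul hV₁ hc heig
  have hsub₁ := conjTranspose_mul_self_le_sandwich_of_sandwich_eq_smul hV₂
    (by rwa [norm_star]) heig'
  rw [conjTranspose_conjTranspose] at hsub₁
  obtain ⟨r, hr⟩ := PrimitiveMap.eq_smul_one_of_le_apply hP₂ (sandwich_monotone V₂)
    (sandwich_one hV₂) (isHermitian_conjTranspose_mul_self F) hsub₂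
  obtain ⟨s, hs⟩ := PrimitiveMap.eq_smul_one_of_le_apply hP₁ (sandwich_monotone V₁)
    (sandwich_one hV₁) (isHermitian_mul_conjTranspose_self F) hsub₁
  obtain ⟨t, hU, hU'⟩ := exists_smul_unitary_of_mul_conjTranspose_eq_smul_one hF hr hs
  have hUc : sandwich V₁ V₂ (t • F) = c • t • F := by
    rw [LinearMap.map_smul_of_tower, heig, smul_comm]
  exact ⟨t • F, hU, hU', eq_smul_kronecker_mul_of_sandwich_eq_smul hV₁ hV₂ hU hc hUc, hUc⟩
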